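/- arXiv:2506.05254 — 2 statements merged into one kernel-verified Lean document; each statement's English description precedes it below -/
import Mathlib

section
/- Let m ≥ 2 and n ≥ 1. Then the trace of the multiplier polynomial P_{m,n} satisfies tr(P_{m,n}) = 2^n · ∑_{d|n} (−1)^{n/d} μ(n/d) · T((∏_{i=m−1}^{m+d−2} a_i)^{n/d}, a_{m+d−1} + a_{m−1}), where μ is the Möbius function. -/
open Polynomial Finset

noncomputable section

/-- The critical-orbit polynomials: `a 1 = c`, `a (i+1) = (a i)^2 + c`. -/
def a : ℕ → Polynomial ℤ
  | 0 => 0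
  | n + 1 => (a n) ^ 2 + X

/-- The image of an integer polynomial in the field `ℚ(c)` of rational functions. -/
def toRF (f : Polynomial ℤ) : RatFunc ℚ :=
  algebraMap (Polynomial ℚ) (RatFunc ℚ) (f.map (Int.castRingHom ℚ))

/-- The Möbius-product formula defining the Misiurewicz polynomial `G_{m,n}`. -/
def Gform (m n : ℕ) : RatFunc ℚ :=
  (∏ k ∈ n.divisors, (toRF (a (m + k - 1) + a (m - 1))) ^ (ArithmeticFunction.moebius (n / k))) *
    (if n ∣ (m - 1) then
      ∏ k ∈ n.divisors, (toRF (a k)) ^ (-(ArithmeticFunction.moebius (n / k)))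
    else 1)

/-- `G` is the Misiurewicz polynomial `G_{m,n}`. -/
def IsMisiurewicz (m n : ℕ) (G : Polynomial ℤ) : Prop :=
  G.Monic ∧ toRF G = Gform m n

/-- The image of an integer polynomial in `ℂ[c]`. -/
def c2 (f : Polynomial ℤ) : Polynomial ℂ := f.map (Int.castRingHom ℂ)

/-- The multiplier `λ_{m,n}(α) = 2^n ∏_{i=0}^{n−1} a_{m+i}(α)`. -/
def lam (m n : ℕ) (α : ℂ) : ℂ :=
  (2 : ℂ) ^ n * ∏ i ∈ range n, Polynomial.aeval α (a (m + i))

/-- `T f g`: the sum of `f` over the roots of `g`, with multiplicity. -/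
def T (f g : Polynomial ℂ) : ℂ := (g.roots.map (fun c => f.eval c)).sum

/-- The trace of the multiplier polynomial `P_{m,n} = ∏_α (x − λ_{m,n}(α))`:
the sum of the multipliers `λ_{m,n}(α)` over the roots `α` of `G_{m,n}`. -/
def trP (m n : ℕ) (G : Polynomial ℤ) : ℂ := ((c2 G).roots.map (lam m n)).sum

/-! ### Auxiliary definitions -/

/-- `toRF` as a ring hom. -/
def Phi : Polynomial ℤ →+* RatFunc ℚ :=
  (algebraMap (Polynomial ℚ) (RatFunc ℚ)).comp (Polynomial.mapRingHom (Int.castRingHom ℚ))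

/-- `c2` as a ring hom. -/
def c2h : Polynomial ℤ →+* Polynomial ℂ := Polynomial.mapRingHom (Int.castRingHom ℂ)

/-- positive-sign divisors -/
def PS (n : ℕ) : Finset ℕ := n.divisors.filter (fun k => ArithmeticFunction.moebius (n / k) = 1)

/-- negative-sign divisors -/
def NS (n : ℕ) : Finset ℕ := n.divisors.filter (fun k => ArithmeticFunction.moebius (n / k) = -1)

/-- The auxiliary polynomial `u_k = a_{m+k-1} + a_{m-1}`. -/
def uu (m k : ℕ) : Polynomial ℤ := a (m + k - 1) + a (m - 1)

/-- The product `F = ∏_{i=0}^{n-1} a_{m+i}` over `ℂ`. -/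
def FF (m n : ℕ) : Polynomial ℂ := ∏ i ∈ range n, c2 (a (m + i))

/-! ### Basic lemmas -/

lemma toRF_eq (f : Polynomial ℤ) : toRF f = Phi f := rfl

lemma Phi_inj : Function.Injective Phi :=
  (IsFractionRing.injective (Polynomial ℚ) (RatFunc ℚ)).comp
    (Polynomial.map_injective _ Int.cast_injective)

lemma Phi_ne_zero {f : Polynomial ℤ} (hf : f ≠ 0) : Phi f ≠ 0 := by
  intro h; exact hf (Phi_inj (h.trans (map_zero Phi).symm))

lemma c2_eq (f : Polynomial ℤ) : c2 f = c2h f := rfl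

lemma a_monic_deg : ∀ k : ℕ, (a (k+1)).Monic ∧ (a (k+1)).natDegree = 2 ^ k := by
  intro k
  induction k with
  | zero => constructor <;> simp [a, monic_X]
  | succ k ih =>
    obtain ⟨hm, hd⟩ := ih
    have hsq : ((a (k+1))^2).Monic := hm.pow 2
    have hdsq : ((a (k+1))^2).natDegree = 2^(k+1) := by
      rw [natDegree_pow, hd]; ring
    have hlt : (X : Polynomial ℤ).degree < ((a (k+1))^2).degree := by
      rw [degree_X, degree_eq_natDegree hsq.ne_zero, hdsq]
      exact_mod_cast Nat.one_lt_two_pow_iff.mpr (Nat.succ_ne_zero k)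
    refine ⟨hsq.add_of_left hlt, ?_⟩
    show ((a (k+1))^2 + X).natDegree = _
    rw [← hdsq]
    exact natDegree_eq_of_degree_eq ((degree_add_eq_left_of_degree_lt hlt))

lemma a_monic {k : ℕ} (hk : 1 ≤ k) : (a k).Monic := by
  cases k with
  | zero => omega
  | succ j => exact (a_monic_deg j).1

lemma a_natDegree {k : ℕ} (hk : 1 ≤ k) : (a k).natDegree = 2 ^ (k - 1) := by
  cases k with
  | zero => omega
  | succ j => simpa using (a_monic_deg j).2

lemma u_monic {m k : ℕ} (hm : 2 ≤ m) (hk : 1 ≤ k) : (uu m k).Monic := by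
  have h1 : (a (m + k - 1)).Monic := a_monic (by omega)
  refine h1.add_of_left ?_
  rw [degree_eq_natDegree h1.ne_zero,
    degree_eq_natDegree (a_monic (by omega : 1 ≤ m - 1)).ne_zero,
    a_natDegree (by omega : 1 ≤ m + k - 1), a_natDegree (by omega : 1 ≤ m - 1)]
  exact_mod_cast Nat.pow_lt_pow_right one_lt_two (by omega)

lemma c2_monic_ne_zero {f : Polynomial ℤ} (hf : f.Monic) : c2 f ≠ 0 :=
  (hf.map (Int.castRingHom ℂ)).ne_zero

lemma zpow_split {K : Type*} [Field K] {ι : Type*} (s : Finset ι) (x : ι → K) (e : ι → ℤ)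
    (he : ∀ i, e i = 1 ∨ e i = 0 ∨ e i = -1) :
    (∏ i ∈ s, x i ^ e i) =
      (∏ i ∈ s.filter (fun i => e i = 1), x i) * (∏ i ∈ s.filter (fun i => e i = -1), x i)⁻¹ := by
  rw [prod_filter, prod_filter, ← prod_inv_distrib, ← prod_mul_distrib]
  refine prod_congr rfl fun i hi => ?_
  rcases he i with h | h | h <;> simp [h]

lemma moebius_cases (r : ℕ) : ArithmeticFunction.moebius r = 1 ∨
    ArithmeticFunction.moebius r = 0 ∨ ArithmeticFunction.moebius r = -1 := by
  by_cases h : Squarefree r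
  · rw [ArithmeticFunction.moebius_apply_of_squarefree h]
    rcases Nat.even_or_odd (ArithmeticFunction.cardFactors r) with he | ho
    · exact Or.inl (Even.neg_one_pow he)
    · exact Or.inr (Or.inr (Odd.neg_one_pow ho))
  · exact Or.inr (Or.inl (ArithmeticFunction.moebius_eq_zero_of_not_squarefree h))

/-! ### Lemmas about `T` -/

lemma T_mul (f g h : Polynomial ℂ) (hg : g ≠ 0) (hh : h ≠ 0) :
    T f (g * h) = T f g + T f h := by
  unfold T
  rw [roots_mul (mul_ne_zero hg hh), Multiset.map_add, Multiset.sum_add]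

lemma T_one (f : Polynomial ℂ) : T f 1 = 0 := by simp [T]

lemma T_prod {ι : Type*} (f : Polynomial ℂ) (s : Finset ι) (g : ι → Polynomial ℂ)
    (hg : ∀ i ∈ s, g i ≠ 0) : T f (∏ i ∈ s, g i) = ∑ i ∈ s, T f (g i) := by
  classical
  induction s using Finset.induction_on with
  | empty => simp [T_one]
  | insert _ _ hni ih =>
    rename_i i s'
    rw [prod_insert hni, sum_insert hni,
      T_mul _ _ _ (hg i (mem_insert_self i s'))
        (prod_ne_zero_iff.mpr fun j hj => hg j (mem_insert_of_mem hj)),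
      ih (fun j hj => hg j (mem_insert_of_mem hj))]

lemma T_zero_of (f g : Polynomial ℂ) (h : ∀ α ∈ g.roots, f.eval α = 0) : T f g = 0 := by
  unfold T
  apply Multiset.sum_eq_zero
  intro x hx
  obtain ⟨α, hα, rfl⟩ := Multiset.mem_map.mp hx
  exact h α hα

lemma T_eq_mul (f f' g : Polynomial ℂ) (c : ℂ)
    (h : ∀ α ∈ g.roots, f.eval α = c * f'.eval α) : T f g = c * T f' g := by
  unfold T
  rw [← Multiset.sum_map_mul_left]
  congr 1
  exact Multiset.map_congr rfl h

/-! ### Dynamical lemmas -/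

lemma eval_a_zero (α : ℂ) : (c2 (a 0)).eval α = 0 := by simp [a, c2]

lemma eval_a_succ (j : ℕ) (α : ℂ) :
    (c2 (a (j+1))).eval α = ((c2 (a j)).eval α)^2 + α := by
  show ((a j ^ 2 + X).map (Int.castRingHom ℂ)).eval α = _
  simp [c2, Polynomial.map_add, Polynomial.map_pow]

lemma period_of_flip {m d : ℕ} (hm : 2 ≤ m) (hd : 1 ≤ d) (α : ℂ)
    (h : (c2 (a (m + d - 1))).eval α = -((c2 (a (m - 1))).eval α)) :
    ∀ j, (c2 (a (m + d + j))).eval α = (c2 (a (m + j))).eval α := by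
  intro j
  induction j with
  | zero =>
    have h2 : m = (m - 1) + 1 := by omega
    rw [Nat.add_zero, show m + d = (m + d - 1) + 1 by omega, eval_a_succ, h, neg_sq]
    conv_rhs => rw [h2, eval_a_succ]
  | succ j ih =>
    have h1 : m + d + (j+1) = (m + d + j) + 1 := by ring
    have h2 : m + (j+1) = (m + j) + 1 := by ring
    rw [h1, h2, eval_a_succ, eval_a_succ, ih]

lemma period_shift {m d : ℕ} (hm : 2 ≤ m) (hd : 1 ≤ d) (α : ℂ)
    (h : (c2 (a (m + d - 1))).eval α = -((c2 (a (m - 1))).eval α)) :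
    ∀ j i, (c2 (a (m + j * d + i))).eval α = (c2 (a (m + i))).eval α := by
  intro j
  induction j with
  | zero => simp
  | succ j ih =>
    intro i
    have : m + (j+1) * d + i = m + d + (j * d + i) := by ring
    rw [this, period_of_flip hm hd α h, ← add_assoc, ih]

lemma period_of_zero {k : ℕ} (α : ℂ) (h : (c2 (a k)).eval α = 0) :
    ∀ j, (c2 (a (k + j))).eval α = (c2 (a j)).eval α := by
  intro j
  induction j with
  | zero => simpa using h.trans (eval_a_zero α).symm
  | succ j ih => rw [← add_assoc, eval_a_succ, eval_a_succ, ih]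

lemma eval_a_mul_zero {k : ℕ} (α : ℂ) (h : (c2 (a k)).eval α = 0) :
    ∀ j, (c2 (a (k * j))).eval α = 0 := by
  intro j
  induction j with
  | zero => simpa using eval_a_zero α
  | succ j ih =>
    have : k * (j + 1) = k + k * j := by ring
    rw [this, period_of_zero α h, ih]

lemma prod_block {m d : ℕ} (hm : 2 ≤ m) (hd : 1 ≤ d) (α : ℂ)
    (h : (c2 (a (m + d - 1))).eval α = -((c2 (a (m - 1))).eval α)) :
    ∏ i ∈ range d, (c2 (a (m + i))).eval α
      = -(∏ i ∈ Icc (m-1) (m+d-2), (c2 (a i)).eval α) := by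
  have hIcc : Icc (m-1) (m+d-2) = Ico (m-1) (m+d-1) := by
    ext x; simp; omega
  have h2 : ∏ i ∈ Icc (m-1) (m+d-2), (c2 (a i)).eval α
      = ∏ i ∈ range d, (c2 (a (m - 1 + i))).eval α := by
    rw [hIcc, prod_Ico_eq_prod_range, show m + d - 1 - (m - 1) = d from by omega]
  rw [h2]
  have hd1 : d = (d - 1) + 1 := by omega
  rw [hd1, prod_range_succ, prod_range_succ']
  have e1 : ∀ i, m - 1 + (i + 1) = m + i := by intro i; omega
  have e2 : m + (d - 1) = m + d - 1 := by omega
  have e3 : m - 1 + 0 = m - 1 := by omega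
  simp only [e1, e2, e3, h]
  ring

lemma prod_full {m d n : ℕ} (hm : 2 ≤ m) (hd : 1 ≤ d) (hdn : d ∣ n) (α : ℂ)
    (h : (c2 (a (m + d - 1))).eval α = -((c2 (a (m - 1))).eval α)) :
    ∏ i ∈ range n, (c2 (a (m + i))).eval α
      = (∏ i ∈ range d, (c2 (a (m + i))).eval α) ^ (n / d) := by
  obtain ⟨q, rfl⟩ := hdn
  rw [Nat.mul_div_cancel_left q (by omega)]
  induction q with
  | zero => simp
  | succ q ih =>
    have : d * (q + 1) = d * q + d := by ring
    rw [this, prod_range_add, ih, pow_succ]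
    congr 1
    refine prod_congr rfl fun i hi => ?_
    have : m + (d * q + i) = m + q * d + i := by ring
    rw [this, period_shift hm hd α h]

/-! ### The polynomial identity -/

lemma key_identity (m n : ℕ) (hm : 2 ≤ m) (G : Polynomial ℤ)
    (hGform : toRF G = Gform m n) :
    G * (∏ k ∈ NS n, uu m k) * (if n ∣ (m - 1) then ∏ k ∈ PS n, a k else 1)
      = (∏ k ∈ PS n, uu m k) * (if n ∣ (m - 1) then ∏ k ∈ NS n, a k else 1) := by
  classical
  apply Phi_inj
  have hdiv_pos : ∀ k ∈ n.divisors, 1 ≤ k := fun k hk => Nat.pos_of_mem_divisors hk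
  have hNu : (∏ k ∈ NS n, Phi (uu m k)) ≠ 0 :=
    prod_ne_zero_iff.mpr fun k hk =>
      Phi_ne_zero (u_monic hm (hdiv_pos k (mem_filter.mp hk).1)).ne_zero
  have hPa : (∏ k ∈ PS n, Phi (a k)) ≠ 0 :=
    prod_ne_zero_iff.mpr fun k hk =>
      Phi_ne_zero (a_monic (hdiv_pos k (mem_filter.mp hk).1)).ne_zero
  have hG2 : Phi G = (∏ k ∈ PS n, Phi (uu m k)) * (∏ k ∈ NS n, Phi (uu m k))⁻¹ *
      (if n ∣ (m - 1) then
        (∏ k ∈ NS n, Phi (a k)) * (∏ k ∈ PS n, Phi (a k))⁻¹ else 1) := by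
    rw [← toRF_eq, hGform]
    unfold Gform
    rw [zpow_split _ _ _ (fun k => moebius_cases (n / k))]
    have eA : (∏ k ∈ n.divisors.filter (fun k => ArithmeticFunction.moebius (n/k) = 1),
          toRF (a (m + k - 1) + a (m - 1))) *
        (∏ k ∈ n.divisors.filter (fun k => ArithmeticFunction.moebius (n/k) = -1),
          toRF (a (m + k - 1) + a (m - 1)))⁻¹
        = (∏ k ∈ PS n, Phi (uu m k)) * (∏ k ∈ NS n, Phi (uu m k))⁻¹ := rfl
    rw [eA]
    congr 1
    have e1 : n.divisors.filter (fun i => -(ArithmeticFunction.moebius (n/i)) = 1) = NS n := by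
      unfold NS
      apply filter_congr
      intro k _
      constructor <;> (intro hh; omega)
    have e2 : n.divisors.filter (fun i => -(ArithmeticFunction.moebius (n/i)) = -1) = PS n := by
      unfold PS
      apply filter_congr
      intro k _
      constructor <;> (intro hh; omega)
    by_cases h : n ∣ (m - 1)
    · rw [if_pos h, if_pos h, zpow_split _ _ _
        (fun k => by rcases moebius_cases (n / k) with h | h | h <;> simp [h]), e1, e2]
      simp only [toRF_eq]
    · rw [if_neg h, if_neg h]
  by_cases h : n ∣ (m - 1)
  · simp only [map_mul, map_prod, hG2, if_pos h]
    field_simp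
  · simp only [map_mul, map_prod, hG2, if_neg h, map_one]
    field_simp

/-- Lemma 2.10: `tr(P_{m,n}) = 2^n ∑_{d∣n} (−1)^{n/d} μ(n/d)
T((∏_{i=m−1}^{m+d−2} a_i)^{n/d}, a_{m+d−1} + a_{m−1})`. -/
theorem trace_moebius_formula (m n : ℕ) (hm : 2 ≤ m) (hn : 1 ≤ n)
    (G : Polynomial ℤ) (hG : IsMisiurewicz m n G) :
    trP m n G = 2 ^ n * ∑ d ∈ n.divisors,
      (-1 : ℂ) ^ (n / d) * (ArithmeticFunction.moebius (n / d) : ℂ) *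
        T (c2 ((∏ i ∈ Icc (m - 1) (m + d - 2), a i) ^ (n / d)))
          (c2 (a (m + d - 1) + a (m - 1))) := by
  classical
  obtain ⟨hGmon, hGform⟩ := hG
  have hdiv_pos : ∀ k ∈ n.divisors, 1 ≤ k := fun k hk => Nat.pos_of_mem_divisors hk
  have hBne : ∀ k ∈ n.divisors, c2 (uu m k) ≠ 0 := fun k hk =>
    c2_monic_ne_zero (u_monic hm (hdiv_pos k hk))
  have hBneP : ∀ k ∈ PS n, c2 (uu m k) ≠ 0 := fun k hk => hBne k (mem_filter.mp hk).1
  have hBneN : ∀ k ∈ NS n, c2 (uu m k) ≠ 0 := fun k hk => hBne k (mem_filter.mp hk).1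
  have hc2G : c2 G ≠ 0 := c2_monic_ne_zero hGmon
  -- F vanishes at roots of a_k for k ∣ n, when n ∣ m - 1
  have hTa : ∀ k ∈ n.divisors, n ∣ (m - 1) → T (FF m n) (c2 (a k)) = 0 := by
    intro k hk hdvd
    obtain ⟨hkdvd, -⟩ := Nat.mem_divisors.mp hk
    have hk1 := hdiv_pos k hk
    apply T_zero_of
    intro α hα
    have hroot : (c2 (a k)).eval α = 0 :=
      (mem_roots (c2_monic_ne_zero (a_monic hk1))).mp hα
    obtain ⟨t, ht⟩ := hkdvd.trans hdvd
    have hzero : (c2 (a (m + (k - 1)))).eval α = 0 := by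
      have hidx : m + (k - 1) = k * (t + 1) := by rw [Nat.mul_succ, ← ht]; omega
      rw [hidx]
      exact eval_a_mul_zero α hroot (t + 1)
    rw [FF, eval_prod]
    exact Finset.prod_eq_zero (Finset.mem_range.mpr (show k - 1 < n from by
      have := Nat.le_of_dvd (by omega) hkdvd; omega)) hzero
  -- the trace of the correction terms vanishes
  have hTW : ∀ S : Finset ℕ, (∀ k ∈ S, k ∈ n.divisors) →
      T (FF m n) (c2 (if n ∣ (m - 1) then ∏ k ∈ S, a k else 1)) = 0 := by
    intro S hS
    by_cases h : n ∣ (m - 1)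
    · rw [if_pos h, c2_eq, map_prod]
      rw [T_prod _ _ _ (fun k hk => by
        rw [← c2_eq]; exact c2_monic_ne_zero (a_monic (hdiv_pos k (hS k hk))))]
      exact Finset.sum_eq_zero fun k hk => by
        rw [← c2_eq]; exact hTa k (hS k hk) h
    · rw [if_neg h, c2_eq, map_one, T_one]
  -- the main splitting of T F (c2 G)
  have hTG : T (FF m n) (c2 G) =
      (∑ k ∈ PS n, T (FF m n) (c2 (uu m k))) - (∑ k ∈ NS n, T (FF m n) (c2 (uu m k))) := by
    have key := key_identity m n hm G hGform
    have keyC : c2 G * (∏ k ∈ NS n, c2 (uu m k)) *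
          c2 (if n ∣ (m - 1) then ∏ k ∈ PS n, a k else 1)
        = (∏ k ∈ PS n, c2 (uu m k)) * c2 (if n ∣ (m - 1) then ∏ k ∈ NS n, a k else 1) := by
      have := congrArg c2h key
      simpa only [map_mul, map_prod, ← c2_eq] using this
    have hWpne : c2 (if n ∣ (m - 1) then ∏ k ∈ PS n, a k else 1) ≠ 0 := by
      by_cases h : n ∣ (m - 1)
      · rw [if_pos h]
        exact c2_monic_ne_zero (monic_prod_of_monic _ _
          fun k hk => a_monic (hdiv_pos k (mem_filter.mp hk).1))
      · rw [if_neg h, c2_eq, map_one]; exact one_ne_zero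
    have hWnne : c2 (if n ∣ (m - 1) then ∏ k ∈ NS n, a k else 1) ≠ 0 := by
      by_cases h : n ∣ (m - 1)
      · rw [if_pos h]
        exact c2_monic_ne_zero (monic_prod_of_monic _ _
          fun k hk => a_monic (hdiv_pos k (mem_filter.mp hk).1))
      · rw [if_neg h, c2_eq, map_one]; exact one_ne_zero
    have h1 := congrArg (T (FF m n)) keyC
    rw [T_mul _ _ _ (mul_ne_zero hc2G (prod_ne_zero_iff.mpr hBneN)) hWpne,
      T_mul _ _ _ hc2G (prod_ne_zero_iff.mpr hBneN),
      T_mul _ _ _ (prod_ne_zero_iff.mpr hBneP) hWnne,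
      T_prod _ _ _ hBneN, T_prod _ _ _ hBneP,
      hTW (PS n) (fun k hk => (mem_filter.mp hk).1),
      hTW (NS n) (fun k hk => (mem_filter.mp hk).1)] at h1
    linear_combination h1
  -- trP in terms of T
  have htrP : trP m n G = 2^n * T (FF m n) (c2 G) := by
    unfold trP T lam
    rw [← Multiset.sum_map_mul_left]
    congr 1
    apply Multiset.map_congr rfl
    intro α hα
    congr 1
    rw [FF, eval_prod]
    refine prod_congr rfl fun i _ => ?_
    rw [aeval_def, ← eval_map]
    rfl
  -- per-divisor identity
  have hper : ∀ d ∈ n.divisors,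
      (ArithmeticFunction.moebius (n / d) : ℂ) * T (FF m n) (c2 (uu m d))
      = (-1 : ℂ) ^ (n / d) * (ArithmeticFunction.moebius (n / d) : ℂ) *
        T (c2 ((∏ i ∈ Icc (m - 1) (m + d - 2), a i) ^ (n / d)))
          (c2 (a (m + d - 1) + a (m - 1))) := by
    intro d hd
    obtain ⟨hddvd, -⟩ := Nat.mem_divisors.mp hd
    have hd1 := hdiv_pos d hd
    have hTFB : T (FF m n) (c2 (uu m d)) = (-1 : ℂ)^(n / d) *
        T (c2 ((∏ i ∈ Icc (m - 1) (m + d - 2), a i) ^ (n / d)))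
          (c2 (a (m + d - 1) + a (m - 1))) := by
      apply T_eq_mul
      intro α hα
      have hroot : (c2 (uu m d)).eval α = 0 := (mem_roots (hBne d hd)).mp hα
      have hflip : (c2 (a (m + d - 1))).eval α = -((c2 (a (m - 1))).eval α) := by
        have h0 : (c2 (a (m + d - 1))).eval α + (c2 (a (m - 1))).eval α = 0 := by
          have : c2 (uu m d) = c2 (a (m + d - 1)) + c2 (a (m - 1)) := by
            rw [uu, c2_eq, c2_eq, c2_eq, map_add]
          rw [this, eval_add] at hroot
          exact hroot
        linear_combination h0
      rw [FF, eval_prod, prod_full hm hd1 hddvd α hflip, prod_block hm hd1 α hflip]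
      rw [c2_eq, map_pow, map_prod, eval_pow, eval_prod]
      simp only [← c2_eq]
      rw [neg_pow]
    rw [hTFB]
    ring
  -- splitting the divisor sum by the sign of μ
  have hsplit : ∑ d ∈ n.divisors,
        (ArithmeticFunction.moebius (n / d) : ℂ) * T (FF m n) (c2 (uu m d))
      = (∑ k ∈ PS n, T (FF m n) (c2 (uu m k))) - (∑ k ∈ NS n, T (FF m n) (c2 (uu m k))) := by
    rw [← Finset.sum_filter_add_sum_filter_not n.divisors
      (fun k => ArithmeticFunction.moebius (n / k) = 1)]
    have h1 : ∑ d ∈ n.divisors.filter (fun k => ArithmeticFunction.moebius (n / k) = 1),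
          (ArithmeticFunction.moebius (n / d) : ℂ) * T (FF m n) (c2 (uu m d))
        = ∑ k ∈ PS n, T (FF m n) (c2 (uu m k)) := by
      apply Finset.sum_congr rfl
      intro d hd
      rw [(mem_filter.mp hd).2]
      simp
    rw [h1, ← Finset.sum_filter_add_sum_filter_not
      (n.divisors.filter (fun k => ¬ ArithmeticFunction.moebius (n / k) = 1))
      (fun k => ArithmeticFunction.moebius (n / k) = -1)]
    have h2 : ∑ d ∈ (n.divisors.filter (fun k => ¬ ArithmeticFunction.moebius (n / k) = 1)).filter
          (fun k => ArithmeticFunction.moebius (n / k) = -1),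
          (ArithmeticFunction.moebius (n / d) : ℂ) * T (FF m n) (c2 (uu m d))
        = ∑ k ∈ NS n, T (FF m n) (c2 (uu m k)) * (-1) := by
      rw [Finset.filter_filter]
      have e : Finset.filter (fun k => ¬ ArithmeticFunction.moebius (n / k) = 1 ∧
            ArithmeticFunction.moebius (n / k) = -1) n.divisors = NS n := by
        unfold NS
        apply filter_congr
        intro k _
        constructor
        · exact fun h => h.2
        · intro h; exact ⟨by omega, h⟩
      rw [e]
      apply Finset.sum_congr rfl
      intro d hd
      rw [(mem_filter.mp hd).2]
      push_cast
      ring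
    have h3 : ∑ d ∈ (n.divisors.filter
          (fun k => ¬ ArithmeticFunction.moebius (n / k) = 1)).filter
          (fun k => ¬ ArithmeticFunction.moebius (n / k) = -1),
          (ArithmeticFunction.moebius (n / d) : ℂ) * T (FF m n) (c2 (uu m d)) = 0 := by
      apply Finset.sum_eq_zero
      intro d hd
      obtain ⟨hd1, hd2⟩ := mem_filter.mp hd
      obtain ⟨-, hd3⟩ := mem_filter.mp hd1
      have : ArithmeticFunction.moebius (n / d) = 0 := by
        rcases moebius_cases (n / d) with h | h | h
        · exact absurd h hd3
        · exact h
        · exact absurd h hd2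
      rw [this]
      simp
    rw [h2, h3, ← Finset.sum_mul]
    ring
  calc trP m n G = 2^n * T (FF m n) (c2 G) := htrP
    _ = 2^n * ((∑ k ∈ PS n, T (FF m n) (c2 (uu m k)))
          - (∑ k ∈ NS n, T (FF m n) (c2 (uu m k)))) := by rw [hTG]
    _ = 2^n * ∑ d ∈ n.divisors,
          (ArithmeticFunction.moebius (n / d) : ℂ) * T (FF m n) (c2 (uu m d)) := by
        rw [hsplit]
    _ = 2 ^ n * ∑ d ∈ n.divisors,
          (-1 : ℂ) ^ (n / d) * (ArithmeticFunction.moebius (n / d) : ℂ) *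
            T (c2 ((∏ i ∈ Icc (m - 1) (m + d - 2), a i) ^ (n / d)))
              (c2 (a (m + d - 1) + a (m - 1))) := by
        rw [Finset.sum_congr rfl hper]
end
end

section
/- Let p ≥ 3 be an odd prime and m ≥ 3. Then tr(P_{m,p}) = 2^p · (T(a_{m−1}^p, a_m + a_{m−1}) + 2^{m+p−2} − 2^{m−2}). -/
open Polynomial Finset

noncomputable section

namespace TraceAux

/-! ### Basic facts about the critical orbit polynomials -/

lemma a_succ (n : ℕ) : a (n+1) = (a n)^2 + X := rfl

lemma a_one : a 1 = X := by simp [a_succ, a]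

lemma a_monic_deg : ∀ n : ℕ, (a (n+1)).Monic ∧ (a (n+1)).natDegree = 2^n := by
  intro n
  induction n with
  | zero => simp [a_one]
  | succ n ih =>
    obtain ⟨hmon, hdeg⟩ := ih
    have hsq : ((a (n+1))^2).Monic := hmon.pow 2
    have hdsq : ((a (n+1))^2).natDegree = 2^(n+1) := by
      rw [natDegree_pow, hdeg]; ring
    have hlt : (X : Polynomial ℤ).degree < ((a (n+1))^2).degree := by
      rw [degree_X, degree_eq_natDegree hsq.ne_zero, hdsq]
      exact_mod_cast Nat.one_lt_two_pow_iff.2 (Nat.succ_ne_zero n)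
    constructor
    · exact hsq.add_of_left hlt
    · rw [a_succ]
      have := degree_add_eq_left_of_degree_lt hlt
      rw [← hdsq]
      exact natDegree_eq_of_degree_eq this

lemma a_monic (n : ℕ) (h : 1 ≤ n) : (a n).Monic := by
  obtain ⟨k, rfl⟩ := Nat.exists_eq_add_of_le' h
  simpa using (a_monic_deg k).1

lemma a_deg (n : ℕ) (h : 1 ≤ n) : (a n).natDegree = 2^(n-1) := by
  obtain ⟨k, rfl⟩ := Nat.exists_eq_add_of_le' h
  simpa using (a_monic_deg k).2

/-! ### The map to `ℂ[X]` -/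

lemma c2_monic {f : Polynomial ℤ} (h : f.Monic) : (c2 f).Monic := h.map _
lemma c2_natDeg {f : Polynomial ℤ} (h : f.Monic) : (c2 f).natDegree = f.natDegree :=
  h.natDegree_map _
lemma c2_add (f g : Polynomial ℤ) : c2 (f + g) = c2 f + c2 g := Polynomial.map_add _
lemma c2_mul (f g : Polynomial ℤ) : c2 (f * g) = c2 f * c2 g := Polynomial.map_mul _
lemma c2_pow (f : Polynomial ℤ) (n : ℕ) : c2 (f ^ n) = c2 f ^ n := by
  unfold c2; rw [Polynomial.map_pow]
lemma c2_X : c2 X = X := Polynomial.map_X _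
lemma c2_prod {ι : Type*} (s : Finset ι) (f : ι → Polynomial ℤ) :
    c2 (∏ i ∈ s, f i) = ∏ i ∈ s, c2 (f i) := Polynomial.map_prod _ _ _
lemma c2_dvd {f g : Polynomial ℤ} (h : f ∣ g) : c2 f ∣ c2 g := by
  obtain ⟨k, rfl⟩ := h; exact ⟨c2 k, c2_mul f k⟩
lemma c2_a_deg (n : ℕ) (h : 1 ≤ n) : (c2 (a n)).natDegree = 2^(n-1) := by
  rw [c2_natDeg (a_monic n h), a_deg n h]

lemma NZ_monic (i j : ℕ) (h1 : 1 ≤ j) (hij : j < i) :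
    (a i + a j).Monic ∧ (a i + a j).natDegree = 2^(i-1) := by
  have hi : 1 ≤ i := by omega
  have hdlt : (a j).degree < (a i).degree := by
    rw [degree_eq_natDegree (a_monic i hi).ne_zero, degree_eq_natDegree (a_monic j h1).ne_zero,
      a_deg i hi, a_deg j h1]
    exact_mod_cast Nat.pow_lt_pow_right (by norm_num) (by omega)
  refine ⟨(a_monic i hi).add_of_left hdlt, ?_⟩
  rw [← a_deg i hi]
  exact natDegree_eq_of_degree_eq (degree_add_eq_left_of_degree_lt hdlt)

/-! ### Sums over roots -/

lemma sum_roots_congr (g f₁ f₂ : Polynomial ℂ) (hg : g ≠ 0) (h : g ∣ f₁ - f₂) :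
    (g.roots.map (fun z => f₁.eval z)).sum = (g.roots.map (fun z => f₂.eval z)).sum := by
  congr 1
  apply Multiset.map_congr rfl
  intro β hβ
  have hroot : g.eval β = 0 := (mem_roots hg).1 hβ
  obtain ⟨k, hk⟩ := h
  have : f₁.eval β - f₂.eval β = 0 := by
    rw [← eval_sub, hk, eval_mul, hroot, zero_mul]
  exact sub_eq_zero.1 this

lemma sum_roots_eval_eq_zero (g f : Polynomial ℂ) (hg : g ≠ 0) (h : g ∣ f) :
    (g.roots.map (fun z => f.eval z)).sum = 0 := by
  apply Multiset.sum_eq_zero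
  intro x hx
  obtain ⟨β, hβ, rfl⟩ := Multiset.mem_map.1 hx
  have hroot : g.eval β = 0 := (mem_roots hg).1 hβ
  obtain ⟨k, hk⟩ := h
  rw [hk, eval_mul, hroot, zero_mul]

lemma sum_roots_neg (g f : Polynomial ℂ) :
    (g.roots.map (fun z => (-f).eval z)).sum = -(g.roots.map (fun z => f.eval z)).sum := by
  have hfe : (fun z => (-f).eval z) = (fun z : ℂ => -(f.eval z)) := funext (fun z => by simp)
  rw [hfe]
  exact Multiset.sum_map_neg

lemma sum_roots_congr_neg (g f h : Polynomial ℂ) (hg : g ≠ 0) (hdvd : g ∣ f + h) :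
    (g.roots.map (fun z => f.eval z)).sum = -(g.roots.map (fun z => h.eval z)).sum := by
  rw [sum_roots_congr g f (-h) hg (by rwa [sub_neg_eq_add]), sum_roots_neg]

lemma dvd_prod_sub_prod {ι : Type*} {R : Type*} [CommRing R] (c : R) (s : Finset ι)
    (f g : ι → R) (h : ∀ i ∈ s, c ∣ f i - g i) :
    c ∣ ∏ i ∈ s, f i - ∏ i ∈ s, g i := by
  classical
  induction s using Finset.induction with
  | empty => simp
  | insert _ _ hx ih =>
    rename_i x s'
    rw [prod_insert hx, prod_insert hx]
    have h1 := h x (mem_insert_self _ _)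
    have h2 := ih (fun i hi => h i (mem_insert_of_mem hi))
    have hr : f x * ∏ i ∈ s', f i - g x * ∏ i ∈ s', g i
        = (f x - g x) * ∏ i ∈ s', f i + g x * (∏ i ∈ s', f i - ∏ i ∈ s', g i) := by ring
    rw [hr]
    exact dvd_add (h1.mul_right _) (h2.mul_left _)

/-! ### Divisibility facts for the critical orbit -/

lemma X_dvd_a : ∀ n, (X : Polynomial ℤ) ∣ a n := by
  intro n
  induction n with
  | zero => simp [a]
  | succ n ih =>
    rw [a_succ, sq]
    exact dvd_add (ih.mul_left (a n)) dvd_rfl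

lemma a_dvd_shift (p : ℕ) : ∀ n, a p ∣ a (n + p) - a n := by
  intro n
  induction n with
  | zero => simpa [a] using dvd_rfl (a := a p)
  | succ n ih =>
    have hr : a (n + 1 + p) - a (n + 1) = (a (n + p) - a n) * (a (n + p) + a n) := by
      rw [show n + 1 + p = (n + p) + 1 by ring, a_succ, a_succ]; ring
    rw [hr]
    exact ih.mul_right _

lemma a_dvd_mul (p : ℕ) : ∀ k, a p ∣ a (k * p) := by
  intro k
  induction k with
  | zero => simp [a]
  | succ k ih =>
    have hr : a ((k+1) * p) = (a (k * p + p) - a (k * p)) + a (k * p) := by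
      rw [show (k+1)*p = k*p+p by ring]; ring
    rw [hr]
    exact dvd_add (a_dvd_shift p _) ih

lemma D_dvd (t : ℕ) : ∀ i, (a (t+3) + a (t+2)) ∣ (a (t+3+i) + a (t+2)) := by
  intro i
  induction i with
  | zero => exact dvd_rfl
  | succ i ih =>
    have e1 : a (t+3+(i+1)) = a (t+3+i)^2 + X := rfl
    have e2 : a (t+3) = a (t+2)^2 + X := rfl
    have hr : a (t+3+(i+1)) + a (t+2)
        = (a (t+3+i) + a (t+2)) * (a (t+3+i) - a (t+2)) + (a (t+3) + a (t+2)) := by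
      rw [e1, e2]; ring
    rw [hr]
    exact dvd_add (ih.mul_right _) dvd_rfl

lemma geom_deg (t : ℕ) : ∀ k, (∑ i ∈ range k, 2^(t+1+i)) + 2^(t+1) = 2^(t+1+k) := by
  intro k
  induction k with
  | zero => simp
  | succ k ih =>
    rw [sum_range_succ, show t+1+(k+1) = (t+1+k)+1 from rfl, pow_succ]
    omega

lemma exists_mult (p n : ℕ) (hp : 0 < p) : ∃ j, j < p ∧ ∃ k, n + j = k * p := by
  obtain ⟨q, r, hqr, hrlt⟩ : ∃ q r, n = q * p + r ∧ r < p :=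
    ⟨n / p, n % p, (Nat.div_add_mod' n p).symm, Nat.mod_lt n hp⟩
  by_cases hr : r = 0
  · exact ⟨0, hp, q, by omega⟩
  · exact ⟨p - r, by omega, q + 1, by rw [add_mul, one_mul]; omega⟩

/-! ### The residue formula for sums over roots -/

lemma sum_roots_eq_coeff : ∀ (n : ℕ) (g f q r : Polynomial ℂ), g.Monic → g.natDegree = n + 1 →
    f * derivative g = q * g + r → r.degree < g.degree →
    (g.roots.map (fun z => f.eval z)).sum = r.coeff n := by
  intro n
  induction n with
  | zero =>
    intro g f q r hg hdeg hid hr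
    have hg1 : g = X + C (g.coeff 0) := hg.eq_X_add_C hdeg
    set γ : ℂ := -(g.coeff 0) with hγ
    have hg2 : g = X - C γ := by rw [hγ, C_neg, sub_neg_eq_add]; exact hg1
    have hrC : r = C (r.coeff 0) := by
      apply eq_C_of_degree_le_zero
      have hdd : g.degree = 1 := by rw [degree_eq_natDegree hg.ne_zero, hdeg]; rfl
      rw [hdd] at hr
      exact Order.le_of_lt_succ hr
    have hroots : g.roots = {γ} := by rw [hg2, roots_X_sub_C]
    rw [hroots]
    simp only [Multiset.map_singleton, Multiset.sum_singleton]
    have hev := congrArg (fun p => Polynomial.eval γ p) hid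
    simp only [eval_mul, eval_add] at hev
    rw [hg2] at hev
    simp only [derivative_sub, derivative_X, derivative_C, sub_zero, eval_one, mul_one,
      eval_sub, eval_X, eval_C, sub_self, mul_zero, zero_add] at hev
    rw [hev]
    conv_lhs => rw [hrC]
    simp
  | succ n ih =>
    intro g f q r hg hdeg hid hr
    have hgne : g ≠ 0 := hg.ne_zero
    have hgdeg : g.degree = ((n:ℕ) + 2 : ℕ) := by
      rw [degree_eq_natDegree hgne, hdeg]
    obtain ⟨β, hβ⟩ := Complex.exists_root (by rw [hgdeg]; exact_mod_cast Nat.succ_pos _)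
    set h : Polynomial ℂ := g /ₘ (X - C β) with hh
    have hfac : (X - C β) * h = g := mul_divByMonic_eq_iff_isRoot.2 hβ
    have hhmonic : h.Monic := (monic_X_sub_C β).of_mul_monic_left (hfac.symm ▸ hg)
    have hhne : h ≠ 0 := hhmonic.ne_zero
    have hhdeg : h.natDegree = n + 1 := by
      have := natDegree_mul (X_sub_C_ne_zero β) hhne
      rw [hfac, hdeg, natDegree_X_sub_C] at this
      omega
    have hhdegree : h.degree = ((n:ℕ) + 1 : ℕ) := by rw [degree_eq_natDegree hhne, hhdeg]
    set r₁ : Polynomial ℂ := (f * derivative h) %ₘ h with hr₁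
    set q₁ : Polynomial ℂ := (f * derivative h) /ₘ h with hq₁
    have hid₁ : f * derivative h = q₁ * h + r₁ := by
      have := modByMonic_add_div (f * derivative h) h
      linear_combination -this
    have hr₁lt : r₁.degree < h.degree := degree_modByMonic_lt _ hhmonic
    have ihsum : (h.roots.map (fun z => f.eval z)).sum = r₁.coeff n :=
      ih h f q₁ r₁ hhmonic hhdeg hid₁ hr₁lt
    set c₀ : Polynomial ℂ := f + (X - C β) * q₁ - (X - C β) * q with hc₀
    have hgder : derivative g = h + (X - C β) * derivative h := by
      rw [← hfac, derivative_mul, derivative_sub, derivative_X, derivative_C]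
      ring
    have hkey : c₀ * h = r - (X - C β) * r₁ := by
      rw [hgder, ← hfac] at hid
      linear_combination hid - (X - C β) * hid₁
    have hXr₁ : ((X - C β) * r₁).degree < g.degree := by
      by_cases hz : r₁ = 0
      · rw [hz, mul_zero, degree_zero, hgdeg]
        exact WithBot.bot_lt_coe _
      · rw [degree_mul, degree_X_sub_C, hgdeg]
        have hlt : r₁.degree < ((n:ℕ)+1 : ℕ) := by rw [← hhdegree]; exact hr₁lt
        rw [degree_eq_natDegree hz] at hlt ⊢
        have h2 : r₁.natDegree < n + 1 := by exact_mod_cast hlt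
        have hcast : (1 : WithBot ℕ) + (r₁.natDegree : WithBot ℕ)
            = ((1 + r₁.natDegree : ℕ) : WithBot ℕ) := by push_cast; ring
        rw [hcast]
        exact_mod_cast by omega
    have hrhs : (r - (X - C β) * r₁).degree < g.degree :=
      lt_of_le_of_lt (degree_sub_le _ _) (max_lt hr hXr₁)
    have hc₀C : c₀ = C (f.eval β) := by
      have hdegc : c₀.degree ≤ 0 := by
        by_cases hz : c₀ = 0
        · rw [hz]; simp
        · have hne : c₀ * h ≠ 0 := mul_ne_zero hz hhne
          have hlt : (c₀ * h).degree < g.degree := hkey ▸ hrhs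
          rw [degree_mul, degree_eq_natDegree hz, hhdegree, hgdeg] at hlt
          have hnd : c₀.natDegree = 0 := by
            by_contra hcon
            have h1 : (1:ℕ) ≤ c₀.natDegree := Nat.one_le_iff_ne_zero.2 hcon
            have h3 : ((c₀.natDegree : ℕ) : WithBot ℕ) + ((n+1:ℕ) : WithBot ℕ)
                < ((n+2 : ℕ) : WithBot ℕ) := hlt
            have h4 : (c₀.natDegree + (n+1) : ℕ) < n + 2 := by exact_mod_cast h3
            omega
          rw [degree_eq_natDegree hz, hnd]; rfl
      have h1 : c₀ = C (c₀.coeff 0) := eq_C_of_degree_le_zero hdegc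
      have h2 : c₀.coeff 0 = c₀.eval β := by
        conv_rhs => rw [h1]
        simp
      have h3 : c₀.eval β = f.eval β := by rw [hc₀]; simp
      rw [h1, h2, h3]
    have hrdecomp : r = C (f.eval β) * h + (X - C β) * r₁ := by
      rw [← hc₀C]; linear_combination -hkey
    have hr₁top : r₁.coeff (n+1) = 0 := by
      apply coeff_eq_zero_of_degree_lt
      rw [hhdegree] at hr₁lt; exact_mod_cast hr₁lt
    have hcoeff : r.coeff (n+1) = f.eval β + r₁.coeff n := by
      rw [hrdecomp]
      rw [coeff_add, coeff_C_mul, sub_mul, coeff_sub, coeff_X_mul, coeff_C_mul, hr₁top]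
      have hone : h.coeff (n+1) = 1 := by rw [← hhdeg]; exact hhmonic.coeff_natDegree
      rw [hone]
      ring
    rw [hcoeff, ← hfac, roots_mul (hfac.symm ▸ hgne), roots_X_sub_C]
    simp [ihsum]

lemma deriv_facts (f : Polynomial ℂ) (hf : f.Monic) (hd : f.natDegree ≠ 0) :
    derivative f ≠ 0 ∧ (derivative f).natDegree + 1 = f.natDegree ∧
      (derivative f).leadingCoeff = (f.natDegree : ℂ) := by
  obtain ⟨k, hk⟩ : ∃ k, f.natDegree = k + 1 := ⟨f.natDegree - 1, by omega⟩
  have hco : (derivative f).coeff k = (k+1 : ℂ) := by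
    rw [coeff_derivative, ← hk, hf.coeff_natDegree]
    ring
  have hne : (derivative f).coeff k ≠ 0 := by
    rw [hco]; exact Nat.cast_add_one_ne_zero k
  have hnd : (derivative f).natDegree = k := by
    refine le_antisymm ?_ (le_natDegree_of_ne_zero hne)
    have := natDegree_derivative_le f
    omega
  refine ⟨fun h0 => hne (by simp [h0]), by omega, ?_⟩
  rw [leadingCoeff, hnd, hco, hk]; push_cast; ring

lemma derivative_sq (f : Polynomial ℂ) : derivative (f^2) = 2 * f * derivative f := by
  rw [derivative_pow, map_natCast]
  norm_num

/-! ### The key sum over the roots of `a (m+p-1) + a (m-1)` -/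

lemma key_sum (t p : ℕ) (hp : 3 ≤ p) :
    ((c2 (a (t+2+p) + a (t+2))).roots.map
      (fun z => (c2 (∏ i ∈ range p, a (t+2+i))).eval z)).sum
    = (2^(t+1) : ℂ) - 2^(t+p+1) := by
  have hE1 : 2 ≤ 2^(t+1) := by
    calc (2:ℕ) = 2^1 := rfl
    _ ≤ 2^(t+1) := Nat.pow_le_pow_right (by norm_num) (by omega)
  have hE12 : 2^(t+1) ≤ 2^(t+p) := Nat.pow_le_pow_right (by norm_num) (by omega)
  have hE2 : 1 ≤ 2^(t+p) := Nat.one_le_two_pow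
  set u : Polynomial ℂ := c2 (a (t+2)) with hudef
  set AA : Polynomial ℂ := c2 (a (t+p+1)) with hAAdef
  set W : Polynomial ℂ := ∏ i ∈ range (p-1), c2 (a (t+2+i)) with hWdef
  set Q : Polynomial ℂ := c2 (∏ i ∈ range p, a (t+2+i)) with hQdef
  set Nc : Polynomial ℂ := c2 (a (t+2+p) + a (t+2)) with hNcdef
  have hu_mon : u.Monic := c2_monic (a_monic _ (by omega))
  have hu_deg : u.natDegree = 2^(t+1) := by
    rw [hudef, c2_a_deg _ (by omega)]
    congr 1
  have hAA_mon : AA.Monic := c2_monic (a_monic _ (by omega))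
  have hAA_deg : AA.natDegree = 2^(t+p) := by
    rw [hAAdef, c2_a_deg _ (by omega)]
    congr 1
  have hW_mon : W.Monic :=
    monic_prod_of_monic _ _ (fun i _ => c2_monic (a_monic _ (by omega)))
  have hW_deg : W.natDegree + 2^(t+1) = 2^(t+p) := by
    have hcg : ∀ i ∈ range (p-1), (c2 (a (t+2+i))).natDegree = 2^(t+1+i) := by
      intro i _
      rw [c2_a_deg _ (by omega)]
      congr 1
      omega
    calc W.natDegree + 2^(t+1)
        = (∑ i ∈ range (p-1), 2^(t+1+i)) + 2^(t+1) := by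
          rw [hWdef, natDegree_prod _ _
            (fun i _ => (c2_monic (a_monic (t+2+i) (by omega))).ne_zero)]
          congr 1
          exact Finset.sum_congr rfl hcg
    _ = 2^(t+1+(p-1)) := geom_deg t (p-1)
    _ = 2^(t+p) := by congr 1; omega
  have hQ_eq : Q = W * AA := by
    rw [hQdef, c2_prod, show p = (p-1)+1 by omega, prod_range_succ, hWdef, hAAdef,
      show t+2+(p-1) = t+p+1 by omega]
  have hQ_mon : Q.Monic := by rw [hQ_eq]; exact hW_mon.mul hAA_mon
  have hQ_deg : Q.natDegree + 2^(t+1) = 2^(t+p) + 2^(t+p) := by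
    rw [hQ_eq, natDegree_mul hW_mon.ne_zero hAA_mon.ne_zero, hAA_deg, add_right_comm, hW_deg]
  set B : Polynomial ℂ := c2 (a (t+p+2)) with hBdef
  have hB : B = AA^2 + X := by
    rw [hBdef, hAAdef, show t+p+2 = (t+p+1)+1 from rfl, a_succ, c2_add, c2_pow, c2_X]
  have hNc : Nc = B + u := by
    rw [hNcdef, hBdef, hudef, show t+2+p = t+p+2 by omega, c2_add]
  set DA : Polynomial ℂ := derivative AA with hDAdef
  set du : Polynomial ℂ := derivative u with hdudef
  obtain ⟨hDA_ne, hDA_deg, hDA_lead⟩ := deriv_facts AA hAA_mon (by omega)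
  obtain ⟨hdu_ne, hdu_deg, hdu_lead⟩ := deriv_facts u hu_mon (by omega)
  rw [hAA_deg] at hDA_deg hDA_lead
  rw [hu_deg] at hdu_deg hdu_lead
  rw [← hDAdef] at hDA_ne hDA_deg hDA_lead
  rw [← hdudef] at hdu_ne hdu_deg hdu_lead
  set r : Polynomial ℂ := -(2*((u+X)*(W*DA))) + Q + Q*du with hrdef
  have htwoC : (2 : Polynomial ℂ) = C 2 :=
    (map_ofNat (C : ℂ →+* Polynomial ℂ) 2).symm
  have hid : Q * derivative Nc = (2*W*DA) * Nc + r := by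
    rw [hrdef, hNc, hB, hQ_eq, hDAdef, hdudef]
    simp only [derivative_add, derivative_sq, derivative_X]
    ring
  obtain ⟨hNZmon, hNZdeg⟩ := NZ_monic (t+2+p) (t+2) (by omega) (by omega)
  have hNc_mon : Nc.Monic := c2_monic hNZmon
  have hNc_deg : Nc.natDegree = 2^(t+p) + 2^(t+p) := by
    rw [hNcdef, c2_natDeg hNZmon, hNZdeg, show t+2+p-1 = (t+p)+1 by omega, pow_succ]
    ring
  generalize hE1g : (2:ℕ)^(t+1) = E1 at hE1 hE12 hu_deg hW_deg hQ_deg hdu_deg hdu_lead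
  generalize hE2g : (2:ℕ)^(t+p) = E2 at hE12 hE2 hAA_deg hW_deg hQ_deg hDA_deg hDA_lead hNc_deg
  set n₀ : ℕ := E2 + E2 - 1 with hn₀
  have huX_dlt : (X : Polynomial ℂ).degree < u.degree := by
    rw [degree_X, degree_eq_natDegree hu_mon.ne_zero, hu_deg]
    exact_mod_cast by omega
  have huX_mon : (u+X).Monic := hu_mon.add_of_left huX_dlt
  have huX_deg : (u+X).natDegree = E1 := by
    rw [natDegree_eq_of_degree_eq (degree_add_eq_left_of_degree_lt huX_dlt), hu_deg]
  have hZ_deg : ((u+X)*(W*DA)).natDegree = n₀ := by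
    rw [natDegree_mul huX_mon.ne_zero (mul_ne_zero hW_mon.ne_zero hDA_ne),
      natDegree_mul hW_mon.ne_zero hDA_ne, huX_deg]
    omega
  have hZ_lead : ((u+X)*(W*DA)).leadingCoeff = (E2 : ℂ) := by
    rw [leadingCoeff_mul, leadingCoeff_mul, huX_mon.leadingCoeff, hW_mon.leadingCoeff, hDA_lead]
    ring
  have hZ_coeff : ((u+X)*(W*DA)).coeff n₀ = (E2 : ℂ) := by
    rw [← hZ_lead, Polynomial.leadingCoeff, hZ_deg]
  have hQdu_deg : (Q*du).natDegree = n₀ := by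
    rw [natDegree_mul hQ_mon.ne_zero hdu_ne]
    omega
  have hQdu_coeff : (Q*du).coeff n₀ = (E1 : ℂ) := by
    have hl : (Q*du).leadingCoeff = (E1 : ℂ) := by
      rw [leadingCoeff_mul, hQ_mon.leadingCoeff, hdu_lead]
      ring
    rw [← hl, Polynomial.leadingCoeff, hQdu_deg]
  have hQ_coeff : Q.coeff n₀ = 0 := by
    apply coeff_eq_zero_of_natDegree_lt
    omega
  have hr_coeff : r.coeff n₀ = (E1:ℂ) - (E2:ℂ) - (E2:ℂ) := by
    rw [hrdef, coeff_add, coeff_add, coeff_neg, htwoC, coeff_C_mul, hZ_coeff, hQ_coeff,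
      hQdu_coeff]
    ring
  have hr_deg : r.degree < Nc.degree := by
    have b1 : (2*((u+X)*(W*DA))).natDegree ≤ n₀ := by
      refine natDegree_mul_le.trans ?_
      rw [hZ_deg]
      simp
    have b3 : r.natDegree ≤ n₀ := by
      refine (natDegree_add_le _ _).trans (sup_le ?_ (le_of_eq hQdu_deg))
      refine (natDegree_add_le _ _).trans (sup_le ?_ (by omega))
      rw [natDegree_neg]
      exact b1
    calc r.degree ≤ (r.natDegree : WithBot ℕ) := degree_le_natDegree
    _ ≤ (n₀ : WithBot ℕ) := by exact_mod_cast b3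
    _ < Nc.degree := by
        rw [degree_eq_natDegree hNc_mon.ne_zero, hNc_deg]
        exact_mod_cast by omega
  have hfin := sum_roots_eq_coeff n₀ Nc Q (2*W*DA) r hNc_mon (by omega) hid hr_deg
  rw [hfin, hr_coeff, ← hE1g, ← hE2g]
  push_cast [pow_succ]
  ring

/-! ### Extracting the polynomial identity from the Möbius product -/

lemma toRF_injective : Function.Injective toRF := by
  intro f g h
  exact Polynomial.map_injective _ Int.cast_injective (RatFunc.algebraMap_injective ℚ h)

lemma toRF_mul (f g : Polynomial ℤ) : toRF (f*g) = toRF f * toRF g := by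
  unfold toRF
  rw [Polynomial.map_mul, map_mul]

lemma toRF_ne_zero {f : Polynomial ℤ} (h : f ≠ 0) : toRF f ≠ 0 := by
  intro h0
  apply h
  apply toRF_injective
  rw [h0]
  unfold toRF
  simp

lemma misiurewicz_poly (m p : ℕ) (hm : 3 ≤ m) (hp : p.Prime) (hp3 : 3 ≤ p) (G : Polynomial ℤ)
    (hG : IsMisiurewicz m p G) :
    (¬ p ∣ (m-1) ∧ G * (a m + a (m-1)) = a (m+p-1) + a (m-1)) ∨
    (p ∣ (m-1) ∧ G * (a m + a (m-1)) * a p = (a (m+p-1) + a (m-1)) * a 1) := by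
  obtain ⟨hmon, heq⟩ := hG
  unfold Gform at heq
  rw [Nat.Prime.divisors hp] at heq
  rw [Finset.prod_pair (show (1:ℕ) ≠ p by omega),
    Finset.prod_pair (show (1:ℕ) ≠ p by omega)] at heq
  rw [Nat.div_one, Nat.div_self hp.pos, ArithmeticFunction.moebius_apply_prime hp,
    ArithmeticFunction.moebius_apply_one] at heq
  rw [zpow_neg_one, zpow_one, neg_neg, zpow_neg_one, zpow_one] at heq
  rw [show m + 1 - 1 = m from rfl] at heq
  have hDmon := (NZ_monic m (m-1) (by omega) (by omega)).1
  have hNmon := (NZ_monic (m+p-1) (m-1) (by omega) (by omega)).1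
  have hDne : toRF (a m + a (m-1)) ≠ 0 := toRF_ne_zero hDmon.ne_zero
  have hNne : toRF (a (m+p-1) + a (m-1)) ≠ 0 := toRF_ne_zero hNmon.ne_zero
  have hapne : toRF (a p) ≠ 0 := toRF_ne_zero (a_monic p (by omega)).ne_zero
  by_cases hd : p ∣ (m-1)
  · right
    refine ⟨hd, ?_⟩
    rw [if_pos hd] at heq
    apply toRF_injective
    rw [toRF_mul, toRF_mul, toRF_mul, heq]
    field_simp
  · left
    refine ⟨hd, ?_⟩
    rw [if_neg hd, mul_one] at heq
    apply toRF_injective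
    rw [toRF_mul, heq]
    field_simp

end TraceAux

open TraceAux in
/-- Theorem 2.11: for `m ≥ 3` and an odd prime `p`,
`tr(P_{m,p}) = 2^p (T(a_{m−1}^p, a_m + a_{m−1}) + 2^{m+p−2} − 2^{m−2})`. -/
theorem trace_P_m_p (m p : ℕ) (hm : 3 ≤ m) (hp : p.Prime) (hodd : Odd p)
    (G : Polynomial ℤ) (hG : IsMisiurewicz m p G) :
    trP m p G = 2 ^ p *
      (T (c2 ((a (m - 1)) ^ p)) (c2 (a m + a (m - 1)))
        + 2 ^ (m + p - 2) - 2 ^ (m - 2)) := by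
  have hp3 : 3 ≤ p := by
    obtain ⟨k, hk⟩ := hodd
    have := hp.two_le
    omega
  obtain ⟨t, rfl⟩ : ∃ t, m = t + 3 := ⟨m - 3, by omega⟩
  have hGmon := hG.1
  have hfac := misiurewicz_poly (t+3) p (by omega) hp hp3 G hG
  rw [show t+3+p-1 = t+2+p by omega, show t+3-1 = t+2 from rfl] at hfac
  rw [show t+3-1 = t+2 from rfl, show t+3+p-2 = t+p+1 by omega,
    show t+3-2 = t+1 from rfl]
  have hDmon := (NZ_monic (t+3) (t+2) (by omega) (by omega)).1
  have hNmon := (NZ_monic (t+2+p) (t+2) (by omega) (by omega)).1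
  -- the product of the post-critical orbit polynomials
  have hlam : ∀ z : ℂ, lam (t+3) p z = 2^p * (c2 (∏ i ∈ range p, a (t+3+i))).eval z := by
    intro z
    unfold lam
    rw [c2_prod, eval_prod]
    congr 1
    refine Finset.prod_congr rfl (fun i _ => ?_)
    rw [aeval_def, ← Polynomial.eval_map]
    rfl
  have htr : trP (t+3) p G
      = 2^p * ((c2 G).roots.map (fun z => (c2 (∏ i ∈ range p, a (t+3+i))).eval z)).sum := by
    unfold trP
    rw [Multiset.map_congr rfl (fun z _ => hlam z), Multiset.sum_map_mul_left]
  -- splitting the sum over the roots of G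
  have hsplit : ((c2 G).roots.map (fun z => (c2 (∏ i ∈ range p, a (t+3+i))).eval z)).sum
      = ((c2 (a (t+2+p) + a (t+2))).roots.map
          (fun z => (c2 (∏ i ∈ range p, a (t+3+i))).eval z)).sum
        - ((c2 (a (t+3) + a (t+2))).roots.map
          (fun z => (c2 (∏ i ∈ range p, a (t+3+i))).eval z)).sum := by
    rcases hfac with ⟨-, hid⟩ | ⟨hdvd, hid⟩
    · have hC : c2 G * c2 (a (t+3) + a (t+2)) = c2 (a (t+2+p) + a (t+2)) := by
        rw [← c2_mul, hid]
      have hne : c2 G * c2 (a (t+3) + a (t+2)) ≠ 0 := by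
        rw [hC]; exact (c2_monic hNmon).ne_zero
      rw [← hC, roots_mul hne, Multiset.map_add, Multiset.sum_add]
      ring
    · have hC : c2 G * c2 (a (t+3) + a (t+2)) * c2 (a p)
          = c2 (a (t+2+p) + a (t+2)) * c2 (a 1) := by
        rw [← c2_mul, ← c2_mul, ← c2_mul, hid]
      have hne1 : c2 G * c2 (a (t+3) + a (t+2)) ≠ 0 :=
        mul_ne_zero (c2_monic hGmon).ne_zero (c2_monic hDmon).ne_zero
      have hne2 : c2 G * c2 (a (t+3) + a (t+2)) * c2 (a p) ≠ 0 :=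
        mul_ne_zero hne1 (c2_monic (a_monic p (by omega))).ne_zero
      have hroots : (c2 G).roots + (c2 (a (t+3) + a (t+2))).roots + (c2 (a p)).roots
          = (c2 (a (t+2+p) + a (t+2))).roots + (c2 (a 1)).roots := by
        rw [← roots_mul hne1, ← roots_mul hne2, hC,
          roots_mul (hC ▸ hne2)]
      -- `a p` divides the product
      have hpdvd : a p ∣ ∏ i ∈ range p, a (t+3+i) := by
        obtain ⟨j, hj, k, hk⟩ := exists_mult p (t+3) hp.pos
        have h1 : a p ∣ a (t+3+j) := hk ▸ a_dvd_mul p k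
        exact h1.trans (Finset.dvd_prod_of_mem _ (mem_range.2 hj))
      have hXdvd : a 1 ∣ ∏ i ∈ range p, a (t+3+i) := by
        have h1 : a 1 ∣ a (t+3+0) := a_one ▸ X_dvd_a _
        exact h1.trans (Finset.dvd_prod_of_mem _ (mem_range.2 (by omega)))
      have hSap : ((c2 (a p)).roots.map
          (fun z => (c2 (∏ i ∈ range p, a (t+3+i))).eval z)).sum = 0 :=
        sum_roots_eval_eq_zero _ _ (c2_monic (a_monic p (by omega))).ne_zero (c2_dvd hpdvd)
      have hSX : ((c2 (a 1)).roots.map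
          (fun z => (c2 (∏ i ∈ range p, a (t+3+i))).eval z)).sum = 0 :=
        sum_roots_eval_eq_zero _ _ (c2_monic (a_monic 1 le_rfl)).ne_zero (c2_dvd hXdvd)
      have hmap := congrArg
        (fun s : Multiset ℂ => (s.map (fun z => (c2 (∏ i ∈ range p, a (t+3+i))).eval z)).sum)
        hroots
      simp only [Multiset.map_add, Multiset.sum_add] at hmap
      rw [hSap, hSX] at hmap
      linear_combination hmap
  -- value of the sum over the roots of N
  have hMN : (∏ i ∈ range p, a (t+3+i)) + (∏ i ∈ range p, a (t+2+i))
      = (∏ i ∈ range (p-1), a (t+3+i)) * (a (t+2+p) + a (t+2)) := by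
    have h1 := Finset.prod_range_succ (fun i => a (t+3+i)) (p-1)
    rw [show (p-1)+1 = p by omega, show t+3+(p-1) = t+2+p by omega] at h1
    have h2 := Finset.prod_range_succ' (fun i => a (t+2+i)) (p-1)
    rw [show (p-1)+1 = p by omega] at h2
    have h3 : ∀ i ∈ range (p-1), a (t+2+(i+1)) = a (t+3+i) := fun i _ => by congr 1; omega
    rw [Finset.prod_congr rfl h3] at h2
    simp only [Nat.add_zero] at h2
    rw [h1, h2]
    ring
  have hSNval : ((c2 (a (t+2+p) + a (t+2))).roots.map
      (fun z => (c2 (∏ i ∈ range p, a (t+3+i))).eval z)).sum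
      = (2^(t+p+1) : ℂ) - 2^(t+1) := by
    rw [sum_roots_congr_neg _ _ (c2 (∏ i ∈ range p, a (t+2+i))) (c2_monic hNmon).ne_zero
      (by rw [← c2_add]
          exact c2_dvd ⟨∏ i ∈ range (p-1), a (t+3+i), by linear_combination hMN⟩),
      key_sum t p hp3]
    ring
  -- value of the sum over the roots of D
  have hdvdD : (a (t+3) + a (t+2)) ∣ (∏ i ∈ range p, a (t+3+i)) + (a (t+2))^p := by
    have h1 : (a (t+3) + a (t+2)) ∣
        (∏ i ∈ range p, a (t+3+i)) - (∏ _i ∈ range p, (-(a (t+2)))) := by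
      apply dvd_prod_sub_prod
      intro i _
      rw [sub_neg_eq_add]
      exact D_dvd t i
    rw [Finset.prod_const, card_range, hodd.neg_pow, sub_neg_eq_add] at h1
    exact h1
  have hSDval : ((c2 (a (t+3) + a (t+2))).roots.map
      (fun z => (c2 (∏ i ∈ range p, a (t+3+i))).eval z)).sum
      = -(T (c2 ((a (t+2))^p)) (c2 (a (t+3) + a (t+2)))) := by
    rw [sum_roots_congr_neg _ _ (c2 ((a (t+2))^p)) (c2_monic hDmon).ne_zero
      (by rw [← c2_add]; exact c2_dvd hdvdD)]
    rfl
  rw [htr, hsplit, hSNval, hSDval]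
  ring
end
end
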